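/- Let n ≥ 2 be an integer and let a_1, …, a_n, c be real numbers satisfying (∑_{i=1}^n a_i)² = (n−1)(∑_{i=1}^n a_i² + c). Then equality 2·a_1·a_2 = c holds if and only if a_1 + a_2 = a_3 = a_4 = ⋯ = a_n. -/
import Mathlib


/-- Equality case of B. Y. Chen's algebraic lemma: if `n ≥ 2` and real numbers
`a 0, …, a (n-1), c` satisfy `(∑ aᵢ)² = (n − 1)(∑ aᵢ² + c)`, then
`2 a₁ a₂ = c` if and only if `a₁ + a₂ = a₃ = ⋯ = aₙ`
(here `a₁ = a 0`, `a₂ = a 1`, …, in 0-based indexing, so the right-hand side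
says `a 0 + a 1 = a i` for every index `i` with `2 ≤ i`). -/
theorem chen_lemma_equality (n : ℕ) (hn : 2 ≤ n) (a : Fin n → ℝ) (c : ℝ)
    (h : (∑ i, a i) ^ 2 = ((n : ℝ) - 1) * (∑ i, (a i) ^ 2 + c)) :
    2 * a ⟨0, by omega⟩ * a ⟨1, by omega⟩ = c ↔
      ∀ i : Fin n, 2 ≤ (i : ℕ) → a ⟨0, by omega⟩ + a ⟨1, by omega⟩ = a i := by
  set i0 : Fin n := ⟨0, by omega⟩ with hi0
  set i1 : Fin n := ⟨1, by omega⟩ with hi1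
  set F : Finset (Fin n) := Finset.univ.filter (fun i => 2 ≤ (i : ℕ)) with hF
  have hne : i0 ≠ i1 := by simp [hi0, hi1, Fin.ext_iff]
  have hcompl : Finset.univ.filter (fun i : Fin n => ¬ 2 ≤ (i : ℕ)) = {i0, i1} := by
    ext i
    simp only [Finset.mem_filter, Finset.mem_univ, true_and, Finset.mem_insert,
      Finset.mem_singleton, Fin.ext_iff, hi0, hi1]
    omega
  have hsum : ∀ f : Fin n → ℝ, ∑ i, f i = f i0 + f i1 + ∑ i ∈ F, f i := by
    intro f
    rw [← Finset.sum_filter_add_sum_filter_not Finset.univ (fun i : Fin n => 2 ≤ (i : ℕ)) f,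
      hcompl, Finset.sum_pair hne]
    ring
  have hm1 : (0 : ℝ) < (n : ℝ) - 1 := by
    have : (2 : ℝ) ≤ (n : ℝ) := by exact_mod_cast hn
    linarith
  have hcardF : F.card = n - 2 := by
    have h1 : (Finset.univ.filter (fun i : Fin n => 2 ≤ (i : ℕ))).card
        + (Finset.univ.filter (fun i : Fin n => ¬ 2 ≤ (i : ℕ))).card
        = (Finset.univ : Finset (Fin n)).card :=
      Finset.card_filter_add_card_filter_not (fun i : Fin n => 2 ≤ (i : ℕ))
    rw [← hF, hcompl, Finset.card_pair hne, Finset.card_univ, Fintype.card_fin] at h1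
    omega
  have hcard : (F.card : ℝ) = (n : ℝ) - 2 := by
    rw [hcardF, Nat.cast_sub hn]
    push_cast
    ring
  have hS := hsum a
  have hQ := hsum (fun i => a i ^ 2)
  have key : ((n : ℝ) - 1) ^ 2 * (2 * a i0 * a i1 - c)
      = (((n : ℝ) - 1) * (a i0 + a i1) - ∑ i, a i) ^ 2
        + ∑ i ∈ F, (((n : ℝ) - 1) * a i - ∑ j, a j) ^ 2 := by
    have e1 : ∑ i ∈ F, (((n : ℝ) - 1) * a i - ∑ j, a j) ^ 2
        = ((n : ℝ) - 1) ^ 2 * (∑ i ∈ F, a i ^ 2)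
          - 2 * ((n : ℝ) - 1) * (∑ j, a j) * (∑ i ∈ F, a i)
          + (F.card : ℝ) * (∑ j, a j) ^ 2 := by
      have step : ∀ i ∈ F, (((n : ℝ) - 1) * a i - ∑ j, a j) ^ 2
          = ((n : ℝ) - 1) ^ 2 * a i ^ 2 - 2 * ((n : ℝ) - 1) * (∑ j, a j) * a i
            + (∑ j, a j) ^ 2 := fun i _ => by ring
      rw [Finset.sum_congr rfl step, Finset.sum_add_distrib, Finset.sum_sub_distrib,
        ← Finset.mul_sum, ← Finset.mul_sum, Finset.sum_const, nsmul_eq_mul]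
    rw [e1, hcard]
    rw [hS, hQ] at h
    rw [hS]
    linear_combination ((n : ℝ) - 1) * h
  constructor
  · intro hc
    have hz : (((n : ℝ) - 1) * (a i0 + a i1) - ∑ i, a i) ^ 2
        + ∑ i ∈ F, (((n : ℝ) - 1) * a i - ∑ j, a j) ^ 2 = 0 := by
      rw [← key, hc]; ring
    have hnn : (0 : ℝ) ≤ ∑ i ∈ F, (((n : ℝ) - 1) * a i - ∑ j, a j) ^ 2 :=
      Finset.sum_nonneg fun i _ => sq_nonneg _
    have h1 : (((n : ℝ) - 1) * (a i0 + a i1) - ∑ i, a i) = 0 := by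
      nlinarith [sq_nonneg (((n : ℝ) - 1) * (a i0 + a i1) - ∑ i, a i)]
    have h2 : ∑ i ∈ F, (((n : ℝ) - 1) * a i - ∑ j, a j) ^ 2 = 0 := by
      nlinarith [sq_nonneg (((n : ℝ) - 1) * (a i0 + a i1) - ∑ i, a i)]
    intro i hi
    have hiF : i ∈ F := by simp [hF, hi]
    have h3 : (((n : ℝ) - 1) * a i - ∑ j, a j) ^ 2 = 0 :=
      (Finset.sum_eq_zero_iff_of_nonneg fun j _ => sq_nonneg _).mp h2 i hiF
    have h4 : ((n : ℝ) - 1) * a i - ∑ j, a j = 0 := by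
      exact pow_eq_zero_iff (by norm_num) |>.mp h3
    have : ((n : ℝ) - 1) * (a i0 + a i1) = ((n : ℝ) - 1) * a i := by linarith
    have := mul_left_cancel₀ (ne_of_gt hm1) this
    linarith
  · intro hall
    have hSval : ∑ i, a i = ((n : ℝ) - 1) * (a i0 + a i1) := by
      rw [hS]
      have : ∑ i ∈ F, a i = (F.card : ℝ) * (a i0 + a i1) := by
        rw [Finset.sum_congr rfl (fun i hi => ?_), Finset.sum_const, nsmul_eq_mul]
        exact (hall i (by simpa [hF] using hi)).symm
      rw [this, hcard]; ring
    have hzero : ∑ i ∈ F, (((n : ℝ) - 1) * a i - ∑ j, a j) ^ 2 = 0 := by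
      apply Finset.sum_eq_zero
      intro i hi
      have := hall i (by simpa [hF] using hi)
      rw [hSval, ← this]
      ring
    have : ((n : ℝ) - 1) ^ 2 * (2 * a i0 * a i1 - c) = 0 := by
      rw [key, hzero, hSval]; ring
    have h5 : 2 * a i0 * a i1 - c = 0 := by
      have hne2 : ((n : ℝ) - 1) ^ 2 ≠ 0 := pow_ne_zero _ (ne_of_gt hm1)
      exact (mul_eq_zero.mp this).resolve_left hne2
    linarith
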